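/- Let c > 0 be a real number and T ≥ 2 a natural number. Then ∑_{k=⌊T/2⌋+1}^{T} (1/k)·exp(−c·(√T − √k)) ≤ 4/(c·√T) + 2/T. -/

import Mathlib

/-!
Since `T - k = (√T - √k)(√T + √k) ≤ 2√T (√T - √k)` for `k ≤ T`, each term with `k > T/2` is at
most `(2/T) r^(T-k)` where `r = exp (-c/(2√T))`. The geometric series gives
`∑ r^(T-k) ≤ 1/(1 - r)`, and `exp x ≥ 1 + x` bounds this by `1 + 2√T/c`.
-/

open Finset Real

lemma sub_le_two_sqrt_mul_sqrt_sub_sqrt {x y : ℝ} (hy : 0 ≤ y) (hyx : y ≤ x) :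
    x - y ≤ 2 * √x * (√x - √y) := by
  have hsq : √y ≤ √x := sqrt_le_sqrt hyx
  nlinarith [sq_sqrt hy, sq_sqrt (hy.trans hyx), sqrt_nonneg y]

lemma exp_neg_mul_sqrt_sub_sqrt_le_pow {c : ℝ} (hc : 0 ≤ c) {n k : ℕ} (hn : 0 < n) (hk : k ≤ n) :
    exp (-c * (√n - √k)) ≤ exp (-(c / (2 * √n))) ^ (n - k) := by
  have hsqrt : 0 < √(n : ℝ) := sqrt_pos.2 (by exact_mod_cast hn)
  have hgap : ((n : ℝ) - k) * (c / (2 * √n)) ≤ c * (√n - √k) := by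
    rw [← mul_div_assoc, div_le_iff₀ (by positivity)]
    have := sub_le_two_sqrt_mul_sqrt_sub_sqrt k.cast_nonneg (Nat.cast_le (α := ℝ).2 hk)
    nlinarith
  rw [← exp_nat_mul, exp_le_exp, Nat.cast_sub hk]
  linarith

lemma sum_Icc_pow_sub_le {r : ℝ} (hr₀ : 0 ≤ r) (hr₁ : r < 1) (a n : ℕ) :
    ∑ k ∈ Icc a n, r ^ (n - k) ≤ (1 - r)⁻¹ := by
  calc ∑ k ∈ Icc a n, r ^ (n - k)
      ≤ ∑ k ∈ range (n + 1), r ^ (n - k) :=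
        sum_le_sum_of_subset_of_nonneg (fun k hk => by simp only [mem_Icc, mem_range] at hk ⊢; omega)
          (fun _ _ _ => pow_nonneg hr₀ _)
    _ = ∑ j ∈ range (n + 1), r ^ j := sum_range_reflect (r ^ ·) (n + 1)
    _ ≤ 1 / (1 - r) := by simpa using geom_sum_Ico_le_of_lt_one (m := 0) (n := n + 1) hr₀ hr₁
    _ = (1 - r)⁻¹ := one_div _

lemma inv_one_sub_exp_neg_le {x : ℝ} (hx : 0 < x) : (1 - exp (-x))⁻¹ ≤ 1 + x⁻¹ := by
  have h : exp (-x) ≤ (1 + x)⁻¹ := by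
    rw [exp_neg]; exact inv_anti₀ (by positivity) (by linarith [add_one_le_exp x])
  have h' : x / (1 + x) ≤ 1 - exp (-x) := by
    calc x / (1 + x) = 1 - (1 + x)⁻¹ := by field_simp; ring
      _ ≤ 1 - exp (-x) := by linarith
  calc (1 - exp (-x))⁻¹ ≤ (x / (1 + x))⁻¹ := inv_anti₀ (by positivity) h'
    _ = 1 + x⁻¹ := by field_simp; ring

/-- Tail-part bound in the proof of the Square-Root Exponentially Weighted Sum Bound. -/
theorem sqrt_exp_weighted_sum_tail_bound (c : ℝ) (hc : 0 < c) (T : ℕ) (hT : 2 ≤ T) :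
    ∑ k ∈ Finset.Icc (T / 2 + 1) T, (1 / (k : ℝ)) * Real.exp (-c * (Real.sqrt T - Real.sqrt k))
      ≤ 4 / (c * Real.sqrt T) + 2 / T := by
  have hT₀ : 0 < T := by omega
  have hsqrt : 0 < √(T : ℝ) := sqrt_pos.2 (by exact_mod_cast hT₀)
  set x := c / (2 * √(T : ℝ))
  have hx : 0 < x := by positivity
  have hterm : ∀ k ∈ Icc (T / 2 + 1) T,
      1 / (k : ℝ) * exp (-c * (√T - √k)) ≤ 2 / T * exp (-x) ^ (T - k) := by
    intro k hk
    obtain ⟨hk₁, hk₂⟩ := mem_Icc.1 hk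
    have hk₀ : (0 : ℝ) < k := by exact_mod_cast (show 0 < k by omega)
    have hinv : 1 / (k : ℝ) ≤ 2 / T := by
      rw [div_le_div_iff₀ hk₀ (by positivity)]
      exact_mod_cast (show 1 * T ≤ 2 * k by omega)
    exact mul_le_mul hinv (exp_neg_mul_sqrt_sub_sqrt_le_pow hc.le hT₀ hk₂) (exp_pos _).le
      (by positivity)
  calc _ ≤ ∑ k ∈ Icc (T / 2 + 1) T, 2 / T * exp (-x) ^ (T - k) := sum_le_sum hterm
    _ = 2 / T * ∑ k ∈ Icc (T / 2 + 1) T, exp (-x) ^ (T - k) := (mul_sum ..).symm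
    _ ≤ 2 / T * (1 - exp (-x))⁻¹ := by
      gcongr
      exact sum_Icc_pow_sub_le (exp_pos _).le (exp_lt_one_iff.2 (neg_lt_zero.2 hx)) _ _
    _ ≤ 2 / T * (1 + x⁻¹) := by gcongr; exact inv_one_sub_exp_neg_le hx
    _ = 4 / (c * √T) + 2 / T := by
      have hsq : √(T : ℝ) * √T = T := mul_self_sqrt (Nat.cast_nonneg T)
      simp only [x, inv_div]
      field_simp
      linear_combination 4 * hsq
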